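/- The 3-colorability kernel program is correct: let G be a finite graph with vertex set V and edge set E. Consider the normal logic program Π_G over atoms color(v,c), n_color(v,c) for v ∈ V and c ∈ {red, green, blue}, and edge_ok(u,v), edge_ko(u,v) for (u,v) ∈ E, containing for each vertex v the rules color(v,c) ← not color(v,c'), not color(v,c'') for each color c with {c',c''} the other two colors, and n_color(v,c) ← not color(v,c) for each color c; and for each edge (u,v) the rules edge_ok(u,v) ← not edge_ok(u,v); edge_ok(u,v) ← not edge_ko(u,v); and edge_ko(u,v) ← not n_color(u,c), not n_color(v,c) for each color c. Then Π_G has an answer set if and only if G is 3-colorable; moreover, for every answer set S, the assignment sending each vertex v to the unique color c with color(v,c) ∈ S is a proper 3-coloring of G, and conversely every proper 3-coloring of G arises this way from some answer set of Π_G. -/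
import Mathlib


/-- A rule `head ← pos₁,…,posₘ, not neg₁,…, not negₖ` of a normal logic program. -/
structure Rule (α : Type) : Type where
  head : α
  pos : Set α
  neg : Set α

/-- A (normal logic) program is a set of rules. -/
abbrev Program (α : Type) : Type := Set (Rule α)

/-- `M` is closed under the (definite parts of the) rules of `P`:
whenever all positive body atoms of a rule are in `M`, so is its head. -/
def RuleClosed {α : Type} (P : Program α) (M : Set α) : Prop :=
  ∀ r ∈ P, r.pos ⊆ M → r.head ∈ M

/-- The least model of a definite program, as the intersection of all closed sets. -/
def leastModel {α : Type} (P : Program α) : Set α :=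
  ⋂₀ {M | RuleClosed P M}

/-- The Gelfond–Lifschitz reduct `P^S`: delete each rule with a negative literal
`not n` such that `n ∈ S`, and delete all negative literals from the remaining rules. -/
def reduct {α : Type} (P : Program α) (S : Set α) : Program α :=
  {r' | ∃ r ∈ P, (∀ n ∈ r.neg, n ∉ S) ∧ r' = ⟨r.head, r.pos, ∅⟩}

/-- `S` is an answer set (stable model) of `P` iff `S` equals
the least model of the reduct `P^S`. -/
def IsAnswerSet {α : Type} (P : Program α) (S : Set α) : Prop :=
  S = leastModel (reduct P S)

/-- The set of atoms occurring in a program. -/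
def atoms {α : Type} (P : Program α) : Set α :=
  ⋃ r ∈ P, ({r.head} ∪ r.pos ∪ r.neg)

/-- The three colors. -/
inductive Col : Type
  | red | green | blue
deriving DecidableEq

/-- The atoms of the 3-colorability program for a graph with vertices `V`:
`color(v,c)`, `n_color(v,c)`, `edge_ok(u,v)` and `edge_ko(u,v)`. -/
inductive GAtom (V : Type) : Type
  | color : V → Col → GAtom V
  | ncolor : V → Col → GAtom V
  | edgeOk : V → V → GAtom V
  | edgeKo : V → V → GAtom V

/-- The 3-colorability kernel program `Π_G` of a graph `G`: for each vertex `v` and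
color `c`, the rules `color(v,c) ← not color(v,c'), not color(v,c'')` (with `c'`, `c''`
the other two colors) and `n_color(v,c) ← not color(v,c)`; and for each edge `(u,v)`,
the rules `edge_ok(u,v) ← not edge_ok(u,v)`, `edge_ok(u,v) ← not edge_ko(u,v)` and,
for each color `c`, `edge_ko(u,v) ← not n_color(u,c), not n_color(v,c)`. -/
def colProg {V : Type} (G : SimpleGraph V) : Program (GAtom V) :=
  {r | ∃ v c, r = ⟨GAtom.color v c, ∅, {x | ∃ d, d ≠ c ∧ x = GAtom.color v d}⟩}
  ∪ {r | ∃ v c, r = ⟨GAtom.ncolor v c, ∅, {GAtom.color v c}⟩}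
  ∪ {r | ∃ u v, G.Adj u v ∧ r = ⟨GAtom.edgeOk u v, ∅, {GAtom.edgeOk u v}⟩}
  ∪ {r | ∃ u v, G.Adj u v ∧ r = ⟨GAtom.edgeOk u v, ∅, {GAtom.edgeKo u v}⟩}
  ∪ {r | ∃ u v c, G.Adj u v ∧
      r = ⟨GAtom.edgeKo u v, ∅, {GAtom.ncolor u c, GAtom.ncolor v c}⟩}

lemma leastModel_reduct_eq {α : Type} (P : Program α) (S : Set α)
    (h : ∀ r ∈ P, r.pos = ∅) :
    leastModel (reduct P S) =
      {a | ∃ r ∈ P, (∀ n ∈ r.neg, n ∉ S) ∧ a = r.head} := by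
  apply subset_antisymm
  · intro a ha
    exact ha _ (fun r' hr' _ => by
      obtain ⟨r, hr, hneg, rfl⟩ := hr'
      exact ⟨r, hr, hneg, rfl⟩)
  · rintro a ⟨r, hr, hneg, rfl⟩ M hM
    exact hM ⟨r.head, r.pos, ∅⟩ ⟨r, hr, hneg, rfl⟩
      (by rw [h r hr]; exact Set.empty_subset M)

/-- The one-step operator in explicit form. -/
def Tset {V : Type} (G : SimpleGraph V) (S : Set (GAtom V)) : Set (GAtom V) :=
  {a | (∃ v c, (∀ d, d ≠ c → GAtom.color v d ∉ S) ∧ a = GAtom.color v c) ∨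
       (∃ v c, GAtom.color v c ∉ S ∧ a = GAtom.ncolor v c) ∨
       (∃ u v, G.Adj u v ∧ (GAtom.edgeOk u v ∉ S ∨ GAtom.edgeKo u v ∉ S) ∧
          a = GAtom.edgeOk u v) ∨
       (∃ u v c, G.Adj u v ∧ GAtom.ncolor u c ∉ S ∧ GAtom.ncolor v c ∉ S ∧
          a = GAtom.edgeKo u v)}

lemma colProg_pos {V : Type} (G : SimpleGraph V) : ∀ r ∈ colProg G, r.pos = ∅ := by
  rintro r ((((⟨v,c,rfl⟩|⟨v,c,rfl⟩)|⟨u,v,_,rfl⟩)|⟨u,v,_,rfl⟩)|⟨u,v,c,_,rfl⟩) <;> rfl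

lemma leastModel_colProg {V : Type} (G : SimpleGraph V) (S : Set (GAtom V)) :
    leastModel (reduct (colProg G) S) = Tset G S := by
  rw [leastModel_reduct_eq _ _ (colProg_pos G)]
  ext a
  constructor
  · rintro ⟨r, ((((⟨v,c,rfl⟩|⟨v,c,rfl⟩)|⟨u,v,h,rfl⟩)|⟨u,v,h,rfl⟩)|⟨u,v,c,h,rfl⟩), hneg, rfl⟩
    · exact Or.inl ⟨v, c, fun d hd => hneg _ ⟨d, hd, rfl⟩, rfl⟩
    · exact Or.inr (Or.inl ⟨v, c, hneg _ rfl, rfl⟩)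
    · exact Or.inr (Or.inr (Or.inl ⟨u, v, h, Or.inl (hneg _ rfl), rfl⟩))
    · exact Or.inr (Or.inr (Or.inl ⟨u, v, h, Or.inr (hneg _ rfl), rfl⟩))
    · exact Or.inr (Or.inr (Or.inr ⟨u, v, c, h, hneg _ (Set.mem_insert _ _),
        hneg _ (Set.mem_insert_of_mem _ rfl), rfl⟩))
  · rintro (⟨v,c,hc,rfl⟩|⟨v,c,hc,rfl⟩|⟨u,v,h,(hc|hc),rfl⟩|⟨u,v,c,h,h1,h2,rfl⟩)
    · exact ⟨_, Or.inl (Or.inl (Or.inl (Or.inl ⟨v, c, rfl⟩))),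
        by rintro n ⟨d, hd, rfl⟩; exact hc d hd, rfl⟩
    · exact ⟨_, Or.inl (Or.inl (Or.inl (Or.inr ⟨v, c, rfl⟩))),
        by rintro n rfl; exact hc, rfl⟩
    · exact ⟨_, Or.inl (Or.inl (Or.inr ⟨u, v, h, rfl⟩)),
        by rintro n rfl; exact hc, rfl⟩
    · exact ⟨_, Or.inl (Or.inr ⟨u, v, h, rfl⟩),
        by rintro n rfl; exact hc, rfl⟩
    · exact ⟨_, Or.inr ⟨u, v, c, h, rfl⟩,
        by rintro n (rfl|rfl); exacts [h1, h2], rfl⟩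

lemma isAnswerSet_iff {V : Type} (G : SimpleGraph V) (S : Set (GAtom V)) :
    IsAnswerSet (colProg G) S ↔ S = Tset G S := by
  rw [IsAnswerSet, leastModel_colProg]

/- Membership lemmas for Tset -/
lemma mem_Tset_color {V : Type} (G : SimpleGraph V) (S : Set (GAtom V)) (v : V) (c : Col) :
    GAtom.color v c ∈ Tset G S ↔ ∀ d, d ≠ c → GAtom.color v d ∉ S := by
  simp only [Tset, Set.mem_setOf_eq]
  constructor
  · rintro (⟨v',c',h,he⟩|⟨v',c',_,he⟩|⟨u',v',_,_,he⟩|⟨u',v',c',_,_,_,he⟩) <;>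
      cases he
    exact h
  · intro h; exact Or.inl ⟨v, c, h, rfl⟩

lemma mem_Tset_ncolor {V : Type} (G : SimpleGraph V) (S : Set (GAtom V)) (v : V) (c : Col) :
    GAtom.ncolor v c ∈ Tset G S ↔ GAtom.color v c ∉ S := by
  simp only [Tset, Set.mem_setOf_eq]
  constructor
  · rintro (⟨v',c',_,he⟩|⟨v',c',h,he⟩|⟨u',v',_,_,he⟩|⟨u',v',c',_,_,_,he⟩) <;>
      cases he
    exact h
  · intro h; exact Or.inr (Or.inl ⟨v, c, h, rfl⟩)

lemma mem_Tset_edgeOk {V : Type} (G : SimpleGraph V) (S : Set (GAtom V)) (u v : V) :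
    GAtom.edgeOk u v ∈ Tset G S ↔
      G.Adj u v ∧ (GAtom.edgeOk u v ∉ S ∨ GAtom.edgeKo u v ∉ S) := by
  simp only [Tset, Set.mem_setOf_eq]
  constructor
  · rintro (⟨v',c',_,he⟩|⟨v',c',_,he⟩|⟨u',v',ha,h,he⟩|⟨u',v',c',_,_,_,he⟩) <;>
      cases he
    exact ⟨ha, h⟩
  · rintro ⟨ha, h⟩; exact Or.inr (Or.inr (Or.inl ⟨u, v, ha, h, rfl⟩))

lemma mem_Tset_edgeKo {V : Type} (G : SimpleGraph V) (S : Set (GAtom V)) (u v : V) :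
    GAtom.edgeKo u v ∈ Tset G S ↔
      ∃ c, G.Adj u v ∧ GAtom.ncolor u c ∉ S ∧ GAtom.ncolor v c ∉ S := by
  simp only [Tset, Set.mem_setOf_eq]
  constructor
  · rintro (⟨v',c',_,he⟩|⟨v',c',_,he⟩|⟨u',v',_,_,he⟩|⟨u',v',c',ha,h1,h2,he⟩) <;>
      cases he
    exact ⟨c', ha, h1, h2⟩
  · rintro ⟨c, ha, h1, h2⟩; exact Or.inr (Or.inr (Or.inr ⟨u, v, c, ha, h1, h2, rfl⟩))

/-- Forward direction: every answer set yields a proper coloring. -/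
lemma answer_to_coloring {V : Type} (G : SimpleGraph V) (S : Set (GAtom V))
    (hS : IsAnswerSet (colProg G) S) :
    ∃ f : V → Col, (∀ v c, GAtom.color v c ∈ S ↔ f v = c) ∧
      ∀ u v, G.Adj u v → f u ≠ f v := by
  rw [isAnswerSet_iff] at hS
  have memS : ∀ a : GAtom V, a ∈ S ↔ a ∈ Tset G S := fun a => by rw [← hS]
  have hcol : ∀ v c, GAtom.color v c ∈ S ↔ ∀ d, d ≠ c → GAtom.color v d ∉ S :=
    fun v c => (memS _).trans (mem_Tset_color G S v c)
  have hex : ∀ v, ∃ c, GAtom.color v c ∈ S := by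
    intro v
    by_contra h
    push_neg at h
    exact h Col.red ((hcol v Col.red).2 (fun d _ => h d))
  choose f hf using hex
  have hiff : ∀ v c, GAtom.color v c ∈ S ↔ f v = c := by
    intro v c
    constructor
    · intro h
      by_contra hne
      exact ((hcol v c).1 h) (f v) hne (hf v)
    · rintro rfl; exact hf v
  have hnc : ∀ v c, GAtom.ncolor v c ∈ S ↔ f v ≠ c := by
    intro v c
    rw [memS, mem_Tset_ncolor, hiff]
  refine ⟨f, hiff, fun u v ha he => ?_⟩
  have hko : GAtom.edgeKo u v ∈ S := by
    rw [memS, mem_Tset_edgeKo]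
    exact ⟨f u, ha, by rw [hnc u (f u)]; simp, by rw [hnc v (f u)]; simp [he]⟩
  have hok := (memS (GAtom.edgeOk u v)).trans (mem_Tset_edgeOk G S u v)
  by_cases h : GAtom.edgeOk u v ∈ S
  · rcases (hok.1 h).2 with h' | h'
    · exact h' h
    · exact h' hko
  · exact h (hok.2 ⟨ha, Or.inl h⟩)

/-- Backward direction: every proper coloring yields an answer set. -/
lemma coloring_to_answer {V : Type} (G : SimpleGraph V) (f : V → Col)
    (hf : ∀ u v, G.Adj u v → f u ≠ f v) :
    ∃ S, IsAnswerSet (colProg G) S ∧ ∀ v c, (GAtom.color v c ∈ S ↔ f v = c) := by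
  classical
  set S : Set (GAtom V) :=
    {a | (∃ v, a = GAtom.color v (f v)) ∨ (∃ v c, f v ≠ c ∧ a = GAtom.ncolor v c) ∨
         (∃ u v, G.Adj u v ∧ a = GAtom.edgeOk u v)} with hSdef
  have memc : ∀ v c, GAtom.color v c ∈ S ↔ f v = c := by
    intro v c
    simp only [hSdef, Set.mem_setOf_eq]
    constructor
    · rintro (⟨v',he⟩|⟨v',c',_,he⟩|⟨u',v',_,he⟩) <;> cases he
      rfl
    · rintro rfl; exact Or.inl ⟨v, rfl⟩
  have memn : ∀ v c, GAtom.ncolor v c ∈ S ↔ f v ≠ c := by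
    intro v c
    simp only [hSdef, Set.mem_setOf_eq]
    constructor
    · rintro (⟨v',he⟩|⟨v',c',h,he⟩|⟨u',v',_,he⟩) <;> cases he
      exact h
    · intro h; exact Or.inr (Or.inl ⟨v, c, h, rfl⟩)
  have memok : ∀ u v, GAtom.edgeOk u v ∈ S ↔ G.Adj u v := by
    intro u v
    simp only [hSdef, Set.mem_setOf_eq]
    constructor
    · rintro (⟨v',he⟩|⟨v',c',_,he⟩|⟨u',v',h,he⟩) <;> cases he
      exact h
    · intro h; exact Or.inr (Or.inr ⟨u, v, h, rfl⟩)
  have memko : ∀ u v, GAtom.edgeKo u v ∉ S := by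
    intro u v
    simp only [hSdef, Set.mem_setOf_eq]
    rintro (⟨v',he⟩|⟨v',c',_,he⟩|⟨u',v',_,he⟩) <;> cases he
  refine ⟨S, (isAnswerSet_iff G S).2 ?_, memc⟩
  ext a
  cases a with
  | color v c =>
      rw [mem_Tset_color, memc]
      constructor
      · rintro rfl d hd hmem
        exact hd ((memc v d).1 hmem).symm
      · intro h
        by_contra hne
        exact h (f v) hne ((memc v (f v)).2 rfl)
  | ncolor v c =>
      rw [mem_Tset_ncolor, memn, memc]
  | edgeOk u v =>
      rw [mem_Tset_edgeOk, memok]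
      exact ⟨fun h => ⟨h, Or.inr (memko u v)⟩, fun h => h.1⟩
  | edgeKo u v =>
      rw [mem_Tset_edgeKo]
      constructor
      · intro h; exact absurd h (memko u v)
      · rintro ⟨c, ha, h1, h2⟩
        rw [memn, not_not] at h1 h2
        exact (hf u v ha (h1.trans h2.symm)).elim

/-- the 3-colorability kernel program is correct. `Π_G` has an answer set
iff the finite graph `G` is 3-colorable; moreover, for every answer set `S`, the
assignment sending each vertex `v` to the unique color `c` with `color(v,c) ∈ S` is a
proper 3-coloring of `G`; and conversely every proper 3-coloring of `G` arises this way
from some answer set of `Π_G`. -/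
theorem three_colorability_program_correct {V : Type} [Fintype V]
    (G : SimpleGraph V) :
    ((∃ S, IsAnswerSet (colProg G) S) ↔
      ∃ f : V → Col, ∀ u v, G.Adj u v → f u ≠ f v)
    ∧ (∀ S, IsAnswerSet (colProg G) S →
        ∃ f : V → Col, (∀ v c, GAtom.color v c ∈ S ↔ f v = c) ∧
          ∀ u v, G.Adj u v → f u ≠ f v)
    ∧ (∀ f : V → Col, (∀ u v, G.Adj u v → f u ≠ f v) →
        ∃ S, IsAnswerSet (colProg G) S ∧
          ∀ v c, (GAtom.color v c ∈ S ↔ f v = c)) := by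
  refine ⟨⟨?_, ?_⟩, fun S hS => answer_to_coloring G S hS, coloring_to_answer G⟩
  · rintro ⟨S, hS⟩
    obtain ⟨f, _, hf⟩ := answer_to_coloring G S hS
    exact ⟨f, hf⟩
  · rintro ⟨f, hf⟩
    obtain ⟨S, hS, _⟩ := coloring_to_answer G f hf
    exact ⟨S, hS⟩
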